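/- arXiv:math/0303053 — 2 statements merged into one kernel-verified Lean document; each statement's English description precedes it below -/
import Mathlib

section
/- The canonical map (A ⊠ B)^# → A^# ⊠ B^# induced by (φ, ψ) ↦ φ ⊕ ψ is a bijection (an isomorphism of special affine spaces): every affine map χ: A ⊠ B → ℝ with linear part sending v₁ ⊠ w₁ to 1 arises as φ ⊕ ψ for some φ ∈ A^#, ψ ∈ B^#, unique up to the relation (φ + r, ψ − r). -/
/-- Every affine map `χ : A ⊠ B → ℝ` whose linear part sends `v₁ ⊠ w₁` to `1`
(realized as an affine map on `A × B` invariant under the line spanned by `(v₁, −w₁)`,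
with linear part sending `(v₁, 0)` to `1`) arises as `φ ⊕ ψ` with `φ ∈ A^#`, `ψ ∈ B^#`,
uniquely up to the relation `(φ + r, ψ − r)`; i.e. `(A ⊠ B)^# ≅ A^# ⊠ B^#`. -/
theorem stmt5 (V W A B : Type*) [AddCommGroup V] [Module ℝ V] [FiniteDimensional ℝ V]
    [AddCommGroup W] [Module ℝ W] [FiniteDimensional ℝ W]
    [AddTorsor V A] [AddTorsor W B] (v₁ : V) (w₁ : W) (hv : v₁ ≠ 0) (hw : w₁ ≠ 0)
    (χ : (A × B) →ᵃ[ℝ] ℝ)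
    (hinv : χ.linear (v₁, -w₁) = 0) (hone : χ.linear (v₁, 0) = 1) :
    (∃ (φ : A →ᵃ[ℝ] ℝ) (ψ : B →ᵃ[ℝ] ℝ), φ.linear v₁ = 1 ∧ ψ.linear w₁ = 1 ∧
      ∀ (a : A) (b : B), χ (a, b) = φ a + ψ b) ∧
    (∀ (φ φ' : A →ᵃ[ℝ] ℝ) (ψ ψ' : B →ᵃ[ℝ] ℝ),
      φ.linear v₁ = 1 → ψ.linear w₁ = 1 → φ'.linear v₁ = 1 → ψ'.linear w₁ = 1 →
      (∀ (a : A) (b : B), χ (a, b) = φ a + ψ b) →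
      (∀ (a : A) (b : B), χ (a, b) = φ' a + ψ' b) →
      ∃ r : ℝ, (∀ a : A, φ' a = φ a + r) ∧ (∀ b : B, ψ' b = ψ b - r)) := by
  obtain ⟨a₀⟩ := (inferInstance : Nonempty A)
  obtain ⟨b₀⟩ := (inferInstance : Nonempty B)
  constructor
  · -- existence
    have hw1 : χ.linear (0, w₁) = 1 := by
      have h : χ.linear (v₁, 0) - χ.linear (v₁, -w₁) = χ.linear (0, w₁) := by
        rw [← map_sub]; congr 1 <;> simp
      rw [← h, hone, hinv]; ring
    refine ⟨⟨fun a => χ (a, b₀), χ.linear.comp (LinearMap.inl ℝ V W), ?_⟩,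
      ⟨fun b => χ (a₀, b) - χ (a₀, b₀), χ.linear.comp (LinearMap.inr ℝ V W), ?_⟩,
      ?_, ?_, ?_⟩
    · intro p v
      have : (v +ᵥ p, b₀) = (v, (0 : W)) +ᵥ (p, b₀) := by
        simp [Prod.ext_iff, ]
      simp only [this, χ.map_vadd]
      simp [vadd_eq_add]
    · intro p v
      have : ((a₀ : A), v +ᵥ p) = ((0 : V), v) +ᵥ (a₀, p) := by
        simp [Prod.ext_iff]
      simp only [this, χ.map_vadd]
      simp [vadd_eq_add]; ring
    · simpa using hone
    · simpa using hw1
    · intro a b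
      have key : ∀ b : B, χ (a, b) - χ (a₀, b) = χ.linear (a -ᵥ a₀, 0) := by
        intro b
        have h := χ.linearMap_vsub (a, b) (a₀, b)
        simp only [Prod.mk_vsub_mk, vsub_self, vsub_eq_sub] at h
        linarith
      have h1 := key b
      have h2 := key b₀
      simp only [AffineMap.coe_mk]
      linarith
  · -- uniqueness
    intro φ φ' ψ ψ' _ _ _ _ hφψ hφ'ψ'
    refine ⟨φ' a₀ - φ a₀, ?_, ?_⟩
    · intro a
      have h1 := hφψ a b₀
      have h2 := hφ'ψ' a b₀
      have h3 := hφψ a₀ b₀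
      have h4 := hφ'ψ' a₀ b₀
      linarith
    · intro b
      have h1 := hφψ a₀ b
      have h2 := hφ'ψ' a₀ b
      linarith
end

section
/- Let A̲ be a finite-dimensional real affine space and Φ̲: A̲ → A̲^# an affine map whose linear part, viewed as a map V(A̲) → V(A̲)*, is skew self-adjoint. Then for any special affine space A with quotient A̲ there exists exactly one self-dual morphism Φ: A → A^# of special affine spaces lifting Φ̲. -/
/-- Let `Φ̲ : A̲ → A̲^#` be an affine map with skew self-adjoint linear part
(in the coordinate model `A = V × ℝ`, `A^# = V* × ℝ`, `A̲ = V`, `A̲^# = V*`).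
Then there is exactly one lift of `Φ̲` to a self-dual morphism `Φ : A → A^#` of
special affine spaces: exactly one affine map `Φ : V × ℝ → V* × ℝ` covering `Φ̲`,
whose linear part sends the distinguished vector `(0,1)` to `(0,1)`, and which is
self-dual for the canonical pairing `Δ((f,t),(v,r)) = t − r + f(v)`. -/
theorem stmt12 (V : Type*) [AddCommGroup V] [Module ℝ V] [FiniteDimensional ℝ V]
    (Φ' : V →ᵃ[ℝ] Module.Dual ℝ V)
    (hskew : ∀ v w : V, Φ'.linear v w = -(Φ'.linear w v)) :
    ∃! Φ : (V × ℝ) →ᵃ[ℝ] (Module.Dual ℝ V × ℝ),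
      (∀ p : V × ℝ, (Φ p).1 = Φ' p.1) ∧
      Φ.linear (0, 1) = (0, 1) ∧
      (∀ p q : V × ℝ, (Φ p).2 - q.2 + (Φ p).1 q.1 = -((Φ q).2 - p.2 + (Φ q).1 p.1)) := by
  have hdecomp : ∀ v : V, Φ' v = Φ'.linear v + Φ' 0 := by
    intro v
    have := Φ'.map_vadd 0 v
    simpa using this
  refine ⟨{ toFun := fun p => (Φ' p.1, p.2 - Φ' 0 p.1),
            linear := (Φ'.linear.comp (LinearMap.fst ℝ V ℝ)).prod
              (LinearMap.snd ℝ V ℝ - (Φ' 0).comp (LinearMap.fst ℝ V ℝ)),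
            map_vadd' := by
              intro p v
              have h := hdecomp (v.1 + p.1)
              have h2 := hdecomp p.1
              have h3 : Φ' (v.1 + p.1) = Φ'.linear v.1 + Φ' p.1 := by
                rw [h, h2, map_add]; abel
              simp only [Prod.ext_iff]
              constructor
              · simpa using h3
              · simp [map_add]; ring }, ⟨?_, ?_, ?_⟩, ?_⟩
  · intro p; rfl
  · simp
  · intro p q
    show p.2 - Φ' 0 p.1 - q.2 + Φ' p.1 q.1 = -((q.2 - Φ' 0 q.1) - p.2 + Φ' q.1 p.1)
    rw [hdecomp p.1, hdecomp q.1]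
    simp only [LinearMap.add_apply]
    rw [hskew p.1 q.1]
    ring
  · intro Ψ ⟨h1, h2, h3⟩
    apply AffineMap.ext
    intro p
    have key : (Ψ p).2 = p.2 - Φ' 0 p.1 := by
      have h00 := h3 (0, 0) (0, 0)
      have hpq := h3 p (0, 0)
      rw [h1 (0, 0)] at h00
      rw [h1 p, h1 (0, 0)] at hpq
      simp only [show ((0, 0) : V × ℝ).1 = 0 from rfl,
        show ((0, 0) : V × ℝ).2 = (0 : ℝ) from rfl, map_zero] at h00 hpq
      have hz : (Ψ (0, 0)).2 = 0 := by linarith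
      rw [hz] at hpq
      linarith
    have : Ψ p = ((Ψ p).1, (Ψ p).2) := rfl
    rw [this, h1 p, key]
    rfl
end
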